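/- arXiv:1807.08856 — 4 statements merged into one kernel-verified Lean document; each statement's English description precedes it below -/
import Mathlib

section
/- For every p-graph G there exists a p-graph G' in state-determined presentation with the same induced language, L(G') = L(G). -/
/-! Formalization of interaction languages and procrustean graphs (p-graphs). -/

section InteractionLanguages

variable {U Y U' Y' : Type}

/-- A list of events (events are `U ⊕ Y`: actions on the left, observations on the
right) alternates kinds, the first element being an action iff `b = true`. -/
def AltFrom : Bool → List (U ⊕ Y) → Prop
  | _, [] => True
  | b, e :: s => e.isLeft = b ∧ AltFrom (!b) s

/-- A set of event sequences is prefix-closed. -/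
def PrefixClosed (L : Set (List (U ⊕ Y))) : Prop :=
  ∀ s ∈ L, ∀ t : List (U ⊕ Y), t <+: s → t ∈ L

/-- An action-first language: all members alternate starting with an action,
i.e. the language is a subset of (UY)*(U+ε). -/
def IsActionFirst (L : Set (List (U ⊕ Y))) : Prop := ∀ s ∈ L, AltFrom true s

/-- An observation-first language: subset of (YU)*(Y+ε). -/
def IsObservationFirst (L : Set (List (U ⊕ Y))) : Prop := ∀ s ∈ L, AltFrom false s

/-- An interaction language over the event space `U ⊕ Y`. -/
def IsInteractionLang (L : Set (List (U ⊕ Y))) : Prop :=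
  PrefixClosed L ∧ (IsActionFirst L ∨ IsObservationFirst L)

/-- Two languages are akin when both are action-first or both are observation-first. -/
def Akin (LA LB : Set (List (U ⊕ Y))) : Prop :=
  (IsActionFirst LA ∧ IsActionFirst LB) ∨ (IsObservationFirst LA ∧ IsObservationFirst LB)

/-- The last element of the sequence is an action. -/
def ActionTerminal (s : List (U ⊕ Y)) : Prop := ∃ u : U, s.getLast? = some (Sum.inl u)

/-- The last element of the sequence is an observation. -/
def ObservationTerminal (s : List (U ⊕ Y)) : Prop := ∃ y : Y, s.getLast? = some (Sum.inr y)

/-- `LA` is safe on `LB`. -/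
def SafeLang (LA LB : Set (List (U ⊕ Y))) : Prop :=
  ∀ s ∈ LA ∩ LB,
    (ObservationTerminal s → ∀ e : U ⊕ Y, s ++ [e] ∈ LA → s ++ [e] ∈ LB) ∧
    (ActionTerminal s → ∀ e : U ⊕ Y, s ++ [e] ∈ LB → s ++ [e] ∈ LA)

/-- `LA` is finite on `LB`: the lengths of joint sequences are bounded. -/
def FiniteOn (LA LB : Set (List (U ⊕ Y))) : Prop :=
  ∃ k : ℕ, ∀ s ∈ LA ∩ LB, s.length ≤ k

end InteractionLanguages

/-- A procrustean graph (p-graph) over action space `U` and observation space `Y`: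
a finite edge-labeled bipartite directed graph; `label v w` is the set of events
labeling the edge from `v` to `w` (the empty set meaning there is no such edge). -/
structure PGraph (U Y : Type) where
  /-- The (finite) vertex type. -/
  V : Type
  /-- The vertex set is finite. -/
  [finV : Fintype V]
  /-- `true` on action vertices, `false` on observation vertices. -/
  isAct : V → Bool
  /-- Edge labels. -/
  label : V → V → Set (U ⊕ Y)
  /-- Edges from action vertices are labeled by actions and lead to observation vertices. -/
  act_ok : ∀ v w : V, ∀ e ∈ label v w, isAct v = true → e.isLeft = true ∧ isAct w = false
  /-- Edges from observation vertices are labeled by observations and lead to action vertices. -/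
  obs_ok : ∀ v w : V, ∀ e ∈ label v w, isAct v = false → e.isRight = true ∧ isAct w = true
  /-- The set of initial states. -/
  V0 : Set V
  V0_nonempty : V0.Nonempty
  /-- Whether the initial states are action vertices. -/
  startAct : Bool
  /-- Initial states are exclusively action states or exclusively observation states. -/
  V0_uniform : ∀ v ∈ V0, isAct v = startAct

attribute [instance] PGraph.finV

namespace PGraph

variable {U Y U' Y' : Type}

/-- The event sequence `s` transitions in `G` from `v` to `w`. -/
inductive Trans (G : PGraph U Y) : G.V → List (U ⊕ Y) → G.V → Prop
  | nil (v : G.V) : Trans G v [] v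
  | cons {v w x : G.V} {e : U ⊕ Y} {s : List (U ⊕ Y)} :
      e ∈ G.label v w → Trans G w s x → Trans G v (e :: s) x

/-- The induced language of a p-graph: the set of its executions. -/
def lang (G : PGraph U Y) : Set (List (U ⊕ Y)) :=
  {s | ∃ v ∈ G.V0, ∃ w, G.Trans v s w}

/-- A vertex reached by some execution. -/
def Reached (G : PGraph U Y) (w : G.V) : Prop :=
  ∃ s : List (U ⊕ Y), ∃ v ∈ G.V0, G.Trans v s w

/-- A p-graph is in state-determined presentation: a unique initial state and,
at every vertex, labels of distinct outgoing edges pairwise disjoint. -/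
def StateDetermined (G : PGraph U Y) : Prop :=
  (∃ v : G.V, G.V0 = {v}) ∧
  ∀ v w w' : G.V, w ≠ w' → G.label v w ∩ G.label v w' = ∅

/-- A p-graph is single-outputting: every action vertex reached by some execution
has at most one outgoing edge, and that edge's label is a singleton (action) set. -/
def SingleOutputting (G : PGraph U Y) : Prop :=
  ∀ v : G.V, G.isAct v = true → G.Reached v →
    (∀ w w' : G.V, (G.label v w).Nonempty → (G.label v w').Nonempty → w = w') ∧
    (∀ w : G.V, (G.label v w).Nonempty → ∃ u : U, G.label v w = {Sum.inl u})

/-- A deterministic filter: every observation-terminal sequence of the induced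
language has at most one successor in the language. -/
def DeterministicFilter (F : PGraph U Y) : Prop :=
  ∀ s ∈ F.lang, ObservationTerminal s →
    ∀ e e' : U ⊕ Y, s ++ [e] ∈ F.lang → s ++ [e'] ∈ F.lang → e = e'

/-- `IsTrace G v s l`: starting at `v`, the event sequence `s` can be traced along
the sequence of vertices `l` (which begins with `v`). -/
inductive IsTrace (G : PGraph U Y) : G.V → List (U ⊕ Y) → List G.V → Prop
  | nil (v : G.V) : IsTrace G v [] [v]
  | cons {v w : G.V} {e : U ⊕ Y} {s : List (U ⊕ Y)} {l : List G.V} :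
      e ∈ G.label v w → IsTrace G w s l → IsTrace G v (e :: s) (v :: l)

/-- A practicable filter: a single-outputting p-graph in which the validity of every
sequence of the induced language is the consequence of exactly one sequence of
state transitions. -/
def Practicable (F : PGraph U Y) : Prop :=
  F.SingleOutputting ∧
  ∀ s ∈ F.lang, ∃! l : List F.V, ∃ v0 ∈ F.V0, F.IsTrace v0 s l

/-- `P` is safe on `W` (as p-graphs). -/
def SafeOn (P W : PGraph U Y) : Prop := SafeLang P.lang W.lang

/-- The event sequence `s` transitions in `P` from some initial state to some vertex
of the region `T`. -/
def ReachesVia (P : PGraph U Y) (T : Set P.V) (s : List (U ⊕ Y)) : Prop :=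
  ∃ v0 ∈ P.V0, ∃ v ∈ T, P.Trans v0 s v

/-- The plan `(P, Pterm)` solves the planning problem `(W, Vgoal)`. -/
def Solves (P : PGraph U Y) (Pterm : Set P.V) (W : PGraph U Y) (Vgoal : Set W.V) : Prop :=
  Akin P.lang W.lang ∧
  FiniteOn P.lang W.lang ∧
  SafeLang P.lang W.lang ∧
  (∀ s ∈ P.lang ∩ W.lang,
    ReachesVia P Pterm s ∨ ∃ t ∈ P.lang ∩ W.lang, s <+: t ∧ ReachesVia P Pterm t) ∧
  (∀ s ∈ P.lang ∩ W.lang, ReachesVia P Pterm s →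
    ∀ w0 ∈ W.V0, ∀ w : W.V, W.Trans w0 s w → w ∈ Vgoal)

/-- The relation `R ⊆ V(P) × V(W)` relating `v` and `w` when some joint-execution
transitions in `P` from an initial state to `v` and in `W` from an initial state to `w`. -/
def HomRel (P W : PGraph U Y) (v : P.V) (w : W.V) : Prop :=
  ∃ s ∈ P.lang ∩ W.lang, (∃ v0 ∈ P.V0, P.Trans v0 s v) ∧ (∃ w0 ∈ W.V0, W.Trans w0 s w)

/-- A homomorphic solution: a solution for which the relation `HomRel` is a function. -/
def HomomorphicSolution (P : PGraph U Y) (Pterm : Set P.V) (W : PGraph U Y)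
    (Vgoal : Set W.V) : Prop :=
  Solves P Pterm W Vgoal ∧
  ∀ (v : P.V) (w w' : W.V), HomRel P W v w → HomRel P W v w' → w = w'

/-- The union `P ⊎ Q` of two p-graphs (whose initial states are of matching kind). -/
def union (P Q : PGraph U Y) (h : P.startAct = Q.startAct) : PGraph U Y where
  V := P.V ⊕ Q.V
  isAct := Sum.elim P.isAct Q.isAct
  label := fun v w =>
    match v, w with
    | Sum.inl a, Sum.inl b => P.label a b
    | Sum.inr a, Sum.inr b => Q.label a b
    | _, _ => ∅
  act_ok := by
    rintro (a | a) (b | b) e he hv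
    · exact P.act_ok a b e he hv
    · exact absurd he (Set.notMem_empty e)
    · exact absurd he (Set.notMem_empty e)
    · exact Q.act_ok a b e he hv
  obs_ok := by
    rintro (a | a) (b | b) e he hv
    · exact P.obs_ok a b e he hv
    · exact absurd he (Set.notMem_empty e)
    · exact absurd he (Set.notMem_empty e)
    · exact Q.obs_ok a b e he hv
  V0 := Sum.inl '' P.V0 ∪ Sum.inr '' Q.V0
  V0_nonempty := by
    obtain ⟨v, hv⟩ := P.V0_nonempty
    exact ⟨Sum.inl v, Or.inl ⟨v, hv, rfl⟩⟩
  startAct := P.startAct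
  V0_uniform := by
    rintro v (⟨a, ha, rfl⟩ | ⟨a, ha, rfl⟩)
    · exact P.V0_uniform a ha
    · exact (Q.V0_uniform a ha).trans h.symm

/-- The set of states reached in `P` from some initial state by the event sequence `s`. -/
def reachSet (P : PGraph U Y) (s : List (U ⊕ Y)) : Set P.V :=
  {w | ∃ v0 ∈ P.V0, P.Trans v0 s w}

lemma trans_nil_eq {P : PGraph U Y} {v w : P.V} (h : P.Trans v [] w) : w = v := by
  cases h; rfl

lemma edge_flips {P : PGraph U Y} {v w : P.V} {e : U ⊕ Y} (he : e ∈ P.label v w) :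
    P.isAct w = !P.isAct v := by
  cases hv : P.isAct v
  · simpa using (P.obs_ok v w e he hv).2
  · simpa using (P.act_ok v w e he hv).2

lemma trans_parity {P : PGraph U Y} {v w : P.V} {s : List (U ⊕ Y)}
    (h : P.Trans v s w) : P.isAct w = Bool.xor (P.isAct v) (decide (s.length % 2 = 1)) := by
  induction h with
  | nil v => simp
  | cons he _ ih =>
    rename_i v' w' x' e s' _
    rw [ih, edge_flips he]
    rcases Nat.even_or_odd s'.length with hp | hp <;>
      rcases hb : P.isAct v' <;>
      simp_all [Nat.even_iff, Nat.odd_iff, List.length_cons, Nat.succ_mod_two_eq_one_iff,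
        Nat.succ_mod_two_eq_zero_iff]
  
lemma reachSet_homog {P : PGraph U Y} {s : List (U ⊕ Y)} {v w : P.V}
    (hv : v ∈ P.reachSet s) (hw : w ∈ P.reachSet s) : P.isAct v = P.isAct w := by
  obtain ⟨v0, hv0, hv⟩ := hv
  obtain ⟨w0, hw0, hw⟩ := hw
  rw [trans_parity hv, trans_parity hw, P.V0_uniform v0 hv0, P.V0_uniform w0 hw0]

lemma trans_append {P : PGraph U Y} {v x : P.V} {s t : List (U ⊕ Y)}
    (h : P.Trans v (s ++ t) x) : ∃ m : P.V, P.Trans v s m ∧ P.Trans m t x := by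
  induction s generalizing v with
  | nil => exact ⟨v, Trans.nil v, h⟩
  | cons e s ih =>
    cases h with
    | cons he h' =>
      obtain ⟨m, h1, h2⟩ := ih h'
      exact ⟨m, Trans.cons he h1, h2⟩

lemma trans_single {P : PGraph U Y} {v x : P.V} {e : U ⊕ Y}
    (h : P.Trans v [e] x) : e ∈ P.label v x := by
  cases h with
  | cons he h' =>
    rw [trans_nil_eq h']
    exact he

/-- The powerset determinization of a p-graph `P`: vertices are the subsets of
`V(P)` of the form `S(s) = reachSet P s` for `s ∈ L(P)`, the single initial state is
`S(ε) = V0(P)`, and the label of the edge from `S` to `T` contains `e` exactly when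
`S = S(s)`, `T = S(s·e)` for some `s` with `s, s·e ∈ L(P)`. -/
noncomputable def determinize (P : PGraph U Y) : PGraph U Y where
  V := {S : Set P.V // ∃ s ∈ P.lang, P.reachSet s = S}
  finV := Fintype.ofFinite _
  isAct := fun S => by classical exact decide (∃ v ∈ S.1, P.isAct v = true)
  label := fun S T =>
    {e | ∃ s ∈ P.lang, P.reachSet s = S.1 ∧ s ++ [e] ∈ P.lang ∧ P.reachSet (s ++ [e]) = T.1}
  act_ok := by
    classical
    rintro S T e ⟨s, hs, hS, hse, hT⟩ hv
    rw [decide_eq_true_iff] at hv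
    obtain ⟨v, hvS, hvAct⟩ := hv
    obtain ⟨v0, hv0, x, hx⟩ := hse
    obtain ⟨m, hm, hmx⟩ := trans_append hx
    have hmS : m ∈ P.reachSet s := ⟨v0, hv0, hm⟩
    have hedge : e ∈ P.label m x := trans_single hmx
    have hmAct : P.isAct m = true := by
      rw [← hS] at hvS
      rw [reachSet_homog hmS hvS, hvAct]
    obtain ⟨hL, hxA⟩ := P.act_ok m x e hedge hmAct
    refine ⟨hL, ?_⟩
    rw [decide_eq_false_iff_not]
    rintro ⟨w, hwT, hwAct⟩
    rw [← hT] at hwT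
    have hxT : x ∈ P.reachSet (s ++ [e]) := ⟨v0, hv0, hx⟩
    rw [reachSet_homog hwT hxT, hxA] at hwAct
    exact Bool.false_ne_true hwAct
  obs_ok := by
    classical
    rintro S T e ⟨s, hs, hS, hse, hT⟩ hv
    rw [decide_eq_false_iff_not] at hv
    obtain ⟨v0, hv0, x, hx⟩ := hse
    obtain ⟨m, hm, hmx⟩ := trans_append hx
    have hmS : m ∈ P.reachSet s := ⟨v0, hv0, hm⟩
    have hedge : e ∈ P.label m x := trans_single hmx
    have hmObs : P.isAct m = false := by
      rcases hma : P.isAct m with _ | _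
      · rfl
      · exact absurd ⟨m, by rwa [hS] at hmS, hma⟩ hv
    obtain ⟨hR, hxA⟩ := P.obs_ok m x e hedge hmObs
    refine ⟨hR, ?_⟩
    rw [decide_eq_true_iff]
    refine ⟨x, ?_, hxA⟩
    rw [← hT]
    exact ⟨v0, hv0, hx⟩
  V0 := {⟨P.reachSet [],
    ⟨[], ⟨P.V0_nonempty.choose, P.V0_nonempty.choose_spec,
      P.V0_nonempty.choose, Trans.nil _⟩, rfl⟩⟩}
  V0_nonempty := ⟨_, rfl⟩
  startAct := P.startAct
  V0_uniform := by
    classical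
    rintro S hS
    rw [Set.mem_singleton_iff] at hS
    subst hS
    rcases hsa : P.startAct with _ | _
    · rw [decide_eq_false_iff_not]
      rintro ⟨v, ⟨v0, hv0, hv⟩, hvAct⟩
      rw [trans_nil_eq hv] at hvAct
      rw [P.V0_uniform v0 hv0, hsa] at hvAct
      exact Bool.false_ne_true hvAct
    · rw [decide_eq_true_iff]
      obtain ⟨v, hv⟩ := P.V0_nonempty
      exact ⟨v, ⟨v, hv, Trans.nil v⟩, by rw [P.V0_uniform v hv, hsa]⟩

end PGraph
section Maps

variable {U Y U' Y' : Type}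

/-- A label map: an action map together with an observation map, each assigning a
nonempty set of new events to each event. -/
structure LabelMap (U Y U' Y' : Type) where
  actMap : U → Set U'
  obsMap : Y → Set Y'
  actMap_nonempty : ∀ u : U, (actMap u).Nonempty
  obsMap_nonempty : ∀ y : Y, (obsMap y).Nonempty

/-- Action of a label map on a single event. -/
def LabelMap.event (h : LabelMap U Y U' Y') : U ⊕ Y → Set (U' ⊕ Y')
  | Sum.inl u => Sum.inl '' h.actMap u
  | Sum.inr y => Sum.inr '' h.obsMap y

/-- Extension of a label map to sets of events: `h(S) = ⋃_{e ∈ S} h(e)`. -/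
def LabelMap.setImage (h : LabelMap U Y U' Y') (S : Set (U ⊕ Y)) : Set (U' ⊕ Y') :=
  ⋃ e ∈ S, h.event e

/-- Extension of a label map to p-graphs: replace each edge label `S` with `h(S)`. -/
def PGraph.applyMap (h : LabelMap U Y U' Y') (G : PGraph U Y) : PGraph U' Y' where
  V := G.V
  isAct := G.isAct
  label := fun v w => h.setImage (G.label v w)
  act_ok := by
    intro v w e' he' hv
    simp only [LabelMap.setImage, Set.mem_iUnion, exists_prop] at he'
    obtain ⟨e, he, hmem⟩ := he'
    have h1 := G.act_ok v w e he hv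
    refine ⟨?_, h1.2⟩
    cases e with
    | inl u =>
      simp only [LabelMap.event] at hmem
      obtain ⟨u', _, rfl⟩ := hmem
      rfl
    | inr y => simp at h1
  obs_ok := by
    intro v w e' he' hv
    simp only [LabelMap.setImage, Set.mem_iUnion, exists_prop] at he'
    obtain ⟨e, he, hmem⟩ := he'
    have h1 := G.obs_ok v w e he hv
    refine ⟨?_, h1.2⟩
    cases e with
    | inl u => simp at h1
    | inr y =>
      simp only [LabelMap.event] at hmem
      obtain ⟨y', _, rfl⟩ := hmem
      rfl
  V0 := G.V0
  V0_nonempty := G.V0_nonempty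
  startAct := G.startAct
  V0_uniform := G.V0_uniform

/-- Action of an observation map on a single event (actions are left unchanged). -/
def obsEventImage (h : Y → Set Y') : U ⊕ Y → Set (U ⊕ Y')
  | Sum.inl u => {Sum.inl u}
  | Sum.inr y => Sum.inr '' h y

/-- `h_y(F)`: the p-graph `F` with each observation edge label `S` replaced by
`⋃_{y ∈ S} h_y(y)` (action labels unchanged). -/
def PGraph.mapObs (G : PGraph U Y) (h : Y → Set Y') : PGraph U Y' where
  V := G.V
  isAct := G.isAct
  label := fun v w => ⋃ e ∈ G.label v w, obsEventImage h e
  act_ok := by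
    intro v w e' he' hv
    simp only [Set.mem_iUnion, exists_prop] at he'
    obtain ⟨e, he, hmem⟩ := he'
    have h1 := G.act_ok v w e he hv
    refine ⟨?_, h1.2⟩
    cases e with
    | inl u =>
      simp only [obsEventImage, Set.mem_singleton_iff] at hmem
      subst hmem
      rfl
    | inr y => simp at h1
  obs_ok := by
    intro v w e' he' hv
    simp only [Set.mem_iUnion, exists_prop] at he'
    obtain ⟨e, he, hmem⟩ := he'
    have h1 := G.obs_ok v w e he hv
    refine ⟨?_, h1.2⟩
    cases e with
    | inl u => simp at h1
    | inr y =>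
      simp only [obsEventImage] at hmem
      obtain ⟨y', _, rfl⟩ := hmem
      rfl
  V0 := G.V0
  V0_nonempty := G.V0_nonempty
  startAct := G.startAct
  V0_uniform := G.V0_uniform

/-- `corrEvent h e f` holds when `f ∈ h_y(e)` for observations and `f = e` for actions. -/
def corrEvent (h : Y → Set Y') : U ⊕ Y → U ⊕ Y' → Prop
  | Sum.inl u, Sum.inl u' => u' = u
  | Sum.inr y, Sum.inr y' => y' ∈ h y
  | _, _ => False

/-- `F` is equivalent to `F'` modulo the observation map `h`. -/
def EquivMod (F : PGraph U Y) (F' : PGraph U Y') (h : Y → Set Y') : Prop :=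
  ∀ s ∈ F.lang, ObservationTerminal s →
    {u : U | s ++ [Sum.inl u] ∈ F.lang} =
      {u : U | ∃ t : List (U ⊕ Y'),
        List.Forall₂ (corrEvent h) s t ∧ t ++ [Sum.inl u] ∈ F'.lang}

/-- The observation map `h` is non-destructive on `F`. -/
def ObsNonDestructive (F : PGraph U Y) (h : Y → Set Y') : Prop :=
  EquivMod F (F.mapObs h) h

end Maps

/-! The subset construction: the vertices of `determinize P` are the sets `reachSet P s` of
states reached by executions `s`. Since `reachSet P (s ++ [e])` depends only on
`reachSet P s` and `e`, distinct edges out of a vertex carry disjoint labels, and an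
induction on event sequences shows that `s` is traced from the initial vertex exactly along
the sets `reachSet P t` of its prefixes `t`, so both graphs have the same executions. -/

namespace PGraph

variable {U Y : Type} {P : PGraph U Y}

lemma Trans.append {v m x : P.V} {s t : List (U ⊕ Y)}
    (h₁ : P.Trans v s m) (h₂ : P.Trans m t x) : P.Trans v (s ++ t) x := by
  induction h₁ with
  | nil => exact h₂
  | cons he _ ih => exact .cons he (ih h₂)

lemma trans_append_iff {v x : P.V} {s t : List (U ⊕ Y)} :
    P.Trans v (s ++ t) x ↔ ∃ m, P.Trans v s m ∧ P.Trans m t x :=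
  ⟨trans_append, fun ⟨_, h₁, h₂⟩ => h₁.append h₂⟩

lemma trans_singleton_iff {v x : P.V} {e : U ⊕ Y} : P.Trans v [e] x ↔ e ∈ P.label v x :=
  ⟨trans_single, fun he => .cons he (.nil x)⟩

lemma mem_lang_iff_reachSet_nonempty {s : List (U ⊕ Y)} :
    s ∈ P.lang ↔ (P.reachSet s).Nonempty :=
  ⟨fun ⟨v₀, hv₀, w, hw⟩ => ⟨w, v₀, hv₀, hw⟩, fun ⟨w, v₀, hv₀, hw⟩ => ⟨v₀, hv₀, w, hw⟩⟩

lemma nil_mem_lang : [] ∈ P.lang :=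
  let ⟨v, hv⟩ := P.V0_nonempty
  ⟨v, hv, v, .nil v⟩

lemma mem_lang_of_append_mem_lang {s t : List (U ⊕ Y)} (h : s ++ t ∈ P.lang) : s ∈ P.lang :=
  let ⟨v₀, hv₀, _, hw⟩ := h
  let ⟨m, hm, _⟩ := trans_append hw
  ⟨v₀, hv₀, m, hm⟩

lemma reachSet_append_singleton (s : List (U ⊕ Y)) (e : U ⊕ Y) :
    P.reachSet (s ++ [e]) = {x | ∃ m ∈ P.reachSet s, e ∈ P.label m x} := by
  ext x
  simp only [reachSet, Set.mem_ofPred_eq, trans_append_iff, trans_singleton_iff]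
  grind

lemma reachSet_append_singleton_congr {s t : List (U ⊕ Y)}
    (h : P.reachSet s = P.reachSet t) (e : U ⊕ Y) :
    P.reachSet (s ++ [e]) = P.reachSet (t ++ [e]) := by
  rw [reachSet_append_singleton, reachSet_append_singleton, h]

lemma determinize_label_disjoint {S T T' : P.determinize.V} (hne : T ≠ T') :
    P.determinize.label S T ∩ P.determinize.label S T' = ∅ := by
  refine Set.eq_empty_iff_forall_notMem.mpr ?_
  rintro e ⟨⟨s, -, hs, -, hT⟩, ⟨s', -, hs', -, hT'⟩⟩
  exact hne <| Subtype.ext <|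
    hT.symm.trans ((reachSet_append_singleton_congr (hs.trans hs'.symm) e).trans hT')

lemma determinize_stateDetermined : P.determinize.StateDetermined :=
  ⟨⟨_, rfl⟩, fun _ _ _ => determinize_label_disjoint⟩

lemma determinize_trans_iff {S T : P.determinize.V} {t : List (U ⊕ Y)} (ht : t ∈ P.lang)
    (hS : P.reachSet t = S.1) {s : List (U ⊕ Y)} :
    P.determinize.Trans S s T ↔ t ++ s ∈ P.lang ∧ P.reachSet (t ++ s) = T.1 := by
  induction s generalizing S t with
  | nil =>
    simp only [List.append_nil, ht, true_and]
    constructor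
    · rintro ⟨⟩
      exact hS
    · rintro hT
      rw [Subtype.ext (hS.symm.trans hT)]
      exact .nil T
  | cons e s ih =>
    constructor
    · rintro (_ | ⟨⟨t', ht', hS', ht'e, hT'⟩, h⟩)
      have hcongr := reachSet_append_singleton_congr (hS.trans hS'.symm) e
      have hte : t ++ [e] ∈ P.lang := by
        rw [mem_lang_iff_reachSet_nonempty, hcongr]
        exact mem_lang_iff_reachSet_nonempty.mp ht'e
      simpa using (ih hte (hcongr.trans hT')).mp h
    · rintro ⟨h, hT⟩
      have hte : t ++ [e] ∈ P.lang := mem_lang_of_append_mem_lang (t := s) (by simpa using h)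
      let T' : P.determinize.V := ⟨P.reachSet (t ++ [e]), _, hte, rfl⟩
      exact .cons (w := T') ⟨t, ht, hS, hte, rfl⟩
        ((ih hte rfl).mpr (by simpa using ⟨h, hT⟩))

lemma lang_determinize : P.determinize.lang = P.lang := by
  ext s
  constructor
  · rintro ⟨S, rfl, T, hT⟩
    exact ((determinize_trans_iff nil_mem_lang rfl).mp hT).1
  · intro hs
    exact ⟨_, rfl, ⟨_, s, hs, rfl⟩, (determinize_trans_iff nil_mem_lang rfl).mpr ⟨hs, rfl⟩⟩

end PGraph

theorem exists_state_determined_presentation_general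
    {U Y : Type} (G : PGraph U Y) :
    ∃ G' : PGraph U Y, G'.StateDetermined ∧ G'.lang = G.lang :=
  ⟨G.determinize, PGraph.determinize_stateDetermined, PGraph.lang_determinize⟩

/-- For every p-graph `G` there exists a p-graph `G'` in state-determined
presentation with the same induced language, `L(G') = L(G)`. -/
theorem exists_state_determined_presentation
    {U Y : Type} [Nonempty U] [Nonempty Y] (G : PGraph U Y) :
    ∃ G' : PGraph U Y, G'.StateDetermined ∧ G'.lang = G.lang :=
  exists_state_determined_presentation_general G
end

section
/- For every p-graph F whose action space U is finite, there exists a single-outputting p-graph F' with the same induced language, L(F') = L(F). -/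
/-! The subset construction makes `F` deterministic, and splitting each action vertex `S`
into copies `(S, u)`, one per action `u`, leaves each copy a single outgoing edge, labelled
`{u}`. No execution is lost because an observation edge leads to every copy, so the action
that follows is chosen one step early; finiteness of `U` keeps the vertex set finite. A
sequence is then accepted by either graph iff the set of states of `F` it reaches is
nonempty. -/

namespace PGraph

variable {U Y : Type}

def steps (F : PGraph U Y) (S : Set F.V) (s : List (U ⊕ Y)) : Set F.V :=
  {w | ∃ v ∈ S, F.Trans v s w}

section Steps

variable {F : PGraph U Y} {S : Set F.V} {b : Bool}

lemma steps_nil (S : Set F.V) : F.steps S [] = S := by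
  ext w
  exact ⟨fun ⟨v, hv, h⟩ => trans_nil_eq h ▸ hv, fun hw => ⟨w, hw, Trans.nil w⟩⟩

lemma steps_cons (S : Set F.V) (e : U ⊕ Y) (s : List (U ⊕ Y)) :
    F.steps S (e :: s) = F.steps (F.steps S [e]) s := by
  ext w
  constructor
  · rintro ⟨v, hv, h⟩
    obtain _ | ⟨he, h⟩ := h
    exact ⟨_, ⟨v, hv, Trans.cons he (Trans.nil _)⟩, h⟩
  · rintro ⟨m, ⟨v, hv, hvm⟩, h⟩
    exact ⟨v, hv, Trans.cons (trans_single hvm) h⟩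

lemma mem_lang_iff_steps_nonempty {s : List (U ⊕ Y)} :
    s ∈ F.lang ↔ (F.steps F.V0 s).Nonempty :=
  ⟨fun ⟨v, hv, w, h⟩ => ⟨w, v, hv, h⟩, fun ⟨w, v, hv, h⟩ => ⟨v, hv, w, h⟩⟩

lemma isAct_of_mem_steps_singleton (hS : ∀ v ∈ S, F.isAct v = b) {e : U ⊕ Y} :
    ∀ w ∈ F.steps S [e], F.isAct w = !b := by
  rintro w ⟨v, hv, h⟩
  rw [edge_flips (trans_single h), hS v hv]

lemma isLeft_eq_of_steps_nonempty (hS : ∀ v ∈ S, F.isAct v = b) {e : U ⊕ Y}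
    {s : List (U ⊕ Y)} (h : (F.steps S (e :: s)).Nonempty) : e.isLeft = b := by
  obtain ⟨w, v, hv, h⟩ := h
  obtain _ | ⟨he, -⟩ := h
  cases hb : b
  · simpa using (F.obs_ok v _ e he (hS v hv ▸ hb)).1
  · exact (F.act_ok v _ e he (hS v hv ▸ hb)).1

lemma steps_singleton_nonempty {e : U ⊕ Y} {s : List (U ⊕ Y)}
    (h : (F.steps S (e :: s)).Nonempty) : (F.steps S [e]).Nonempty := by
  obtain ⟨w, v, hv, h⟩ := h
  obtain _ | ⟨he, -⟩ := h
  exact ⟨_, v, hv, Trans.cons he (Trans.nil _)⟩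

end Steps

noncomputable def toSingleOutputting [Nonempty U] [Finite U] (F : PGraph U Y) :
    PGraph U Y where
  V := Set F.V ⊕ Set F.V × U
  finV := Fintype.ofFinite _
  isAct := Sum.elim (fun _ => false) (fun _ => true)
  label := fun
    | .inl S, .inr (T, _) => {e | e.isRight ∧ F.steps S [e] = T ∧ T.Nonempty}
    | .inr (S, u), .inl T => {e | e = .inl u ∧ F.steps S [e] = T ∧ T.Nonempty}
    | _, _ => ∅
  act_ok := by
    rintro (S | ⟨S, u⟩) (T | ⟨T, u'⟩) e he hv
    · exact he.elim
    · cases hv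
    · obtain ⟨rfl, -⟩ := he
      exact ⟨rfl, rfl⟩
    · exact he.elim
  obs_ok := by
    rintro (S | ⟨S, u⟩) (T | ⟨T, u'⟩) e he hv
    · exact he.elim
    · exact ⟨he.1, rfl⟩
    · cases hv
    · exact he.elim
  V0 := if F.startAct then Set.range fun u => .inr (F.V0, u) else {.inl F.V0}
  V0_nonempty := by
    split
    · exact Set.range_nonempty _
    · exact Set.singleton_nonempty _
  startAct := F.startAct
  V0_uniform := by
    split
    · rintro _ ⟨u, rfl⟩
      simp_all
    · rintro _ rfl
      simp_all

section ToSingleOutputting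

variable [Nonempty U] [Finite U] {F : PGraph U Y} {S : Set F.V}

def carrier : F.toSingleOutputting.V → Set F.V := Sum.elim id Prod.fst

lemma steps_carrier_of_mem_label {p q : F.toSingleOutputting.V} {e : U ⊕ Y}
    (he : e ∈ F.toSingleOutputting.label p q) :
    F.steps (carrier p) [e] = carrier q ∧ (carrier q).Nonempty := by
  rcases p with S | ⟨S, u⟩ <;> rcases q with T | ⟨T, u'⟩
  · exact he.elim
  · exact he.2
  · exact he.2
  · exact he.elim

lemma steps_carrier_nonempty_of_trans {p q : F.toSingleOutputting.V} {s : List (U ⊕ Y)}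
    (h : F.toSingleOutputting.Trans p s q) (hp : (carrier p).Nonempty) :
    (F.steps (carrier p) s).Nonempty := by
  induction h with
  | nil => rwa [steps_nil]
  | cons he _ ih =>
    obtain ⟨hstep, hne⟩ := steps_carrier_of_mem_label he
    rw [steps_cons, hstep]
    exact ih hne

lemma trans_inl_cons (hS : ∀ v ∈ S, F.isAct v = false) {e : U ⊕ Y} {s : List (U ⊕ Y)} {u : U}
    {q : F.toSingleOutputting.V} (h : (F.steps S (e :: s)).Nonempty)
    (hq : F.toSingleOutputting.Trans (.inr (F.steps S [e], u)) s q) :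
    F.toSingleOutputting.Trans (.inl S) (e :: s) q :=
  have he : e.isRight := by simpa using isLeft_eq_of_steps_nonempty hS h
  Trans.cons (by exact ⟨he, rfl, steps_singleton_nonempty h⟩) hq

lemma trans_inr_cons {u : U} {s : List (U ⊕ Y)} {q : F.toSingleOutputting.V}
    (h : (F.steps S (.inl u :: s)).Nonempty)
    (hq : F.toSingleOutputting.Trans (.inl (F.steps S [.inl u])) s q) :
    F.toSingleOutputting.Trans (.inr (S, u)) (.inl u :: s) q :=
  Trans.cons (by exact ⟨rfl, rfl, steps_singleton_nonempty h⟩) hq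

lemma exists_trans_of_act : ∀ (s : List (U ⊕ Y)) (S : Set F.V),
    (∀ v ∈ S, F.isAct v = true) → (F.steps S s).Nonempty →
    ∃ u q, F.toSingleOutputting.Trans (.inr (S, u)) s q
  | [], _, _, _ => ⟨Classical.arbitrary U, _, Trans.nil _⟩
  | e :: s, S, hS, h => by
    obtain ⟨u, rfl⟩ : ∃ u, e = .inl u := Sum.isLeft_iff.1 (isLeft_eq_of_steps_nonempty hS h)
    have hT : ∀ v ∈ F.steps S [.inl u], F.isAct v = false := isAct_of_mem_steps_singleton hS
    cases s with
    | nil => exact ⟨u, _, trans_inr_cons h (Trans.nil _)⟩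
    | cons e' s =>
      have h' := steps_cons S _ _ ▸ h
      obtain ⟨u', q, hq⟩ := exists_trans_of_act s _ (isAct_of_mem_steps_singleton hT)
        (steps_cons _ e' s ▸ h')
      exact ⟨u, q, trans_inr_cons h (trans_inl_cons hT h' hq)⟩

lemma exists_trans_of_obs (s : List (U ⊕ Y)) (S : Set F.V) (hS : ∀ v ∈ S, F.isAct v = false)
    (h : (F.steps S s).Nonempty) : ∃ q, F.toSingleOutputting.Trans (.inl S) s q := by
  cases s with
  | nil => exact ⟨_, Trans.nil _⟩
  | cons e s =>
    obtain ⟨u, q, hq⟩ := exists_trans_of_act s _ (isAct_of_mem_steps_singleton hS)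
      (steps_cons S e s ▸ h)
    exact ⟨q, trans_inl_cons hS h hq⟩

lemma singleOutputting_toSingleOutputting : F.toSingleOutputting.SingleOutputting := by
  rintro (S | ⟨S, u⟩) hv -
  · cases hv
  refine ⟨?_, ?_⟩
  · rintro (T | ⟨T, _⟩) (T' | ⟨T', _⟩) ⟨e, he⟩ ⟨e', he'⟩
    · obtain ⟨rfl, hT, -⟩ := he
      obtain ⟨rfl, hT', -⟩ := he'
      rw [← hT, ← hT']
    all_goals first | exact he.elim | exact he'.elim
  · rintro (T | ⟨T, _⟩) ⟨e, rfl, hT, hne⟩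
    exact ⟨u, Set.eq_singleton_iff_unique_mem.2 ⟨⟨rfl, hT, hne⟩, fun _ he => he.1⟩⟩

lemma lang_toSingleOutputting : F.toSingleOutputting.lang = F.lang := by
  ext s
  rw [mem_lang_iff_steps_nonempty (F := F)]
  constructor
  · rintro ⟨p, hp, q, h⟩
    have hcarrier : carrier p = F.V0 := by
      simp only [toSingleOutputting] at hp
      split at hp
      · obtain ⟨u, rfl⟩ := hp
        rfl
      · rw [hp]
        rfl
    exact hcarrier ▸ steps_carrier_nonempty_of_trans h (hcarrier ▸ F.V0_nonempty)
  · intro h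
    cases hb : F.startAct
    · obtain ⟨q, hq⟩ := exists_trans_of_obs s F.V0 (fun v hv => hb ▸ F.V0_uniform v hv) h
      exact ⟨.inl F.V0, by simp only [toSingleOutputting, hb]; rfl, q, hq⟩
    · obtain ⟨u, q, hq⟩ := exists_trans_of_act s F.V0 (fun v hv => hb ▸ F.V0_uniform v hv) h
      exact ⟨.inr (F.V0, u), by simp only [toSingleOutputting, hb]; exact ⟨u, rfl⟩, q, hq⟩

end ToSingleOutputting

end PGraph

theorem exists_single_outputting_presentation_general
    {U Y : Type} [Nonempty U] [Finite U] (F : PGraph U Y) :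
    ∃ F' : PGraph U Y, F'.SingleOutputting ∧ F'.lang = F.lang :=
  ⟨F.toSingleOutputting, PGraph.singleOutputting_toSingleOutputting,
    PGraph.lang_toSingleOutputting⟩

/-- For every p-graph `F` whose action space `U` is finite, there exists a
single-outputting p-graph `F'` with the same induced language, `L(F') = L(F)`. -/
theorem exists_single_outputting_presentation
    {U Y : Type} [Nonempty U] [Nonempty Y] [Finite U] (F : PGraph U Y) :
    ∃ F' : PGraph U Y, F'.SingleOutputting ∧ F'.lang = F.lang :=
  exists_single_outputting_presentation_general F
end

section
/- Let (W, V_goal) be a planning problem with W in state-determined presentation. If some plan solves (W, V_goal), then some plan that is a homomorphic solution solves (W, V_goal). -/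
/-! Run the given plan `P` in lockstep with `W`: the product `P × W` has language
`L(P) ∩ L(W)`, hence the same joint-executions as `P`, and it reaches `Pterm × V(W)`
exactly when `P` reaches `Pterm`, so it still solves the problem. Because `W` is
state-determined, a joint-execution reaches a unique vertex of `W`, namely the second
coordinate of the product vertex it reaches; the relation `R` is therefore the second
projection, a function. -/

section Languages

variable {U Y : Type} {LA LA' LB : Set (List (U ⊕ Y))}

lemma Akin.mono_left (h : Akin LA LB) (hsub : LA' ⊆ LA) : Akin LA' LB := by
  rcases h with ⟨hA, hB⟩ | ⟨hA, hB⟩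
  · exact Or.inl ⟨fun s hs => hA s (hsub hs), hB⟩
  · exact Or.inr ⟨fun s hs => hA s (hsub hs), hB⟩

lemma FiniteOn.mono_left (h : FiniteOn LA LB) (hsub : LA' ⊆ LA) : FiniteOn LA' LB :=
  let ⟨k, hk⟩ := h
  ⟨k, fun s hs => hk s ⟨hsub hs.1, hs.2⟩⟩

lemma SafeLang.inter_left (h : SafeLang LA LB) : SafeLang (LA ∩ LB) LB := by
  intro s ⟨⟨hsA, _⟩, hsB⟩
  exact ⟨fun _ _ he => he.2, fun hact e he => ⟨(h s ⟨hsA, hsB⟩).2 hact e he, he⟩⟩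

end Languages

namespace PGraph

variable {U Y : Type}

def prod (P W : PGraph U Y) : PGraph U Y where
  V := P.V × W.V
  isAct x := P.isAct x.1
  label x y := P.label x.1 y.1 ∩ W.label x.2 y.2
  act_ok x y e he hv := P.act_ok x.1 y.1 e he.1 hv
  obs_ok x y e he hv := P.obs_ok x.1 y.1 e he.1 hv
  V0 := P.V0 ×ˢ W.V0
  V0_nonempty := P.V0_nonempty.prod W.V0_nonempty
  startAct := P.startAct
  V0_uniform v hv := P.V0_uniform v.1 hv.1

variable {P W : PGraph U Y}

lemma Trans.prod {v v' : P.V} {w w' : W.V} {s : List (U ⊕ Y)} (hP : P.Trans v s v')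
    (hW : W.Trans w s w') : (P.prod W).Trans (v, w) s (v', w') := by
  induction hP generalizing w with
  | nil => cases hW; exact Trans.nil _
  | cons he _ ih =>
    cases hW with
    | cons he' hW' => exact Trans.cons (w := (_, _)) ⟨he, he'⟩ (ih hW')

lemma trans_prod_iff {s : List (U ⊕ Y)} {x y : (P.prod W).V} :
    (P.prod W).Trans x s y ↔ P.Trans x.1 s y.1 ∧ W.Trans x.2 s y.2 := by
  refine ⟨fun h => ?_, fun ⟨hP, hW⟩ => hP.prod hW⟩
  induction h with
  | nil => exact ⟨Trans.nil _, Trans.nil _⟩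
  | cons he _ ih => exact ⟨Trans.cons he.1 ih.1, Trans.cons he.2 ih.2⟩

lemma lang_prod : (P.prod W).lang = P.lang ∩ W.lang := by
  ext s
  constructor
  · rintro ⟨x₀, hx₀, x, hx⟩
    rw [trans_prod_iff] at hx
    exact ⟨⟨x₀.1, hx₀.1, x.1, hx.1⟩, ⟨x₀.2, hx₀.2, x.2, hx.2⟩⟩
  · rintro ⟨⟨v₀, hv₀, v, hv⟩, ⟨w₀, hw₀, w, hw⟩⟩
    exact ⟨(v₀, w₀), ⟨hv₀, hw₀⟩, (v, w), hv.prod hw⟩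

lemma lang_prod_inter : (P.prod W).lang ∩ W.lang = P.lang ∩ W.lang := by
  rw [lang_prod, Set.inter_assoc, Set.inter_self]

lemma reachesVia_prod_iff {T : Set P.V} {s : List (U ⊕ Y)} :
    (P.prod W).ReachesVia (T ×ˢ Set.univ) s ↔ P.ReachesVia T s ∧ s ∈ W.lang := by
  constructor
  · rintro ⟨x₀, hx₀, x, hxT, hx⟩
    rw [trans_prod_iff] at hx
    exact ⟨⟨x₀.1, hx₀.1, x.1, hxT.1, hx.1⟩, x₀.2, hx₀.2, x.2, hx.2⟩
  · rintro ⟨⟨v₀, hv₀, v, hvT, hv⟩, w₀, hw₀, w, hw⟩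
    exact ⟨(v₀, w₀), ⟨hv₀, hw₀⟩, (v, w), ⟨hvT, trivial⟩, hv.prod hw⟩

lemma Solves.prod {Pterm : Set P.V} {Vgoal : Set W.V} (h : P.Solves Pterm W Vgoal) :
    (P.prod W).Solves (Pterm ×ˢ Set.univ) W Vgoal := by
  obtain ⟨hakin, hfin, hsafe, hreach, hgoal⟩ := h
  have hsub : (P.prod W).lang ⊆ P.lang := lang_prod ▸ Set.inter_subset_left
  refine ⟨hakin.mono_left hsub, hfin.mono_left hsub, lang_prod ▸ hsafe.inter_left,
    fun s hs => ?_, fun s hs hvia => ?_⟩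
  · rw [lang_prod_inter] at hs
    rcases hreach s hs with hvia | ⟨t, ht, hst, hvia⟩
    · exact Or.inl (reachesVia_prod_iff.mpr ⟨hvia, hs.2⟩)
    · exact Or.inr ⟨t, by rwa [lang_prod_inter], hst, reachesVia_prod_iff.mpr ⟨hvia, ht.2⟩⟩
  · rw [lang_prod_inter] at hs
    exact hgoal s hs (reachesVia_prod_iff.mp hvia).1

lemma StateDetermined.trans_eq (hW : W.StateDetermined) {v a b : W.V} {s : List (U ⊕ Y)}
    (ha : W.Trans v s a) (hb : W.Trans v s b) : a = b := by
  induction ha with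
  | nil => exact (trans_nil_eq hb).symm
  | @cons v w _ e _ he _ ih =>
    cases hb with
    | @cons _ w' _ _ _ he' hb' =>
      obtain rfl : w = w' := by
        by_contra hne
        exact (hW.2 v w w' hne).subset ⟨he, he'⟩
      exact ih hb'

lemma StateDetermined.trans_eq_of_mem_V0 (hW : W.StateDetermined) {v v' a b : W.V}
    {s : List (U ⊕ Y)} (hv : v ∈ W.V0) (hv' : v' ∈ W.V0)
    (ha : W.Trans v s a) (hb : W.Trans v' s b) : a = b := by
  obtain ⟨c, hc⟩ := hW.1
  rw [hc, Set.mem_singleton_iff] at hv hv'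
  subst hv hv'
  exact hW.trans_eq ha hb

lemma StateDetermined.homRel_prod_eq_snd (hW : W.StateDetermined) {x : (P.prod W).V}
    {w : W.V} (h : HomRel (P.prod W) W x w) : w = x.2 := by
  obtain ⟨s, -, ⟨x₀, hx₀, hx⟩, w₀, hw₀, hw⟩ := h
  exact hW.trans_eq_of_mem_V0 hw₀ hx₀.2 hw (trans_prod_iff.mp hx).2

end PGraph

theorem plan_exists_implies_homomorphic_plan_exists_general
    {U Y : Type}
    (W : PGraph U Y) (Vgoal : Set W.V) (hW : W.StateDetermined)
    (hsol : ∃ (P : PGraph U Y) (Pterm : Set P.V), PGraph.Solves P Pterm W Vgoal) :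
    ∃ (Q : PGraph U Y) (Qterm : Set Q.V),
      PGraph.HomomorphicSolution Q Qterm W Vgoal := by
  obtain ⟨P, Pterm, hP⟩ := hsol
  refine ⟨P.prod W, Pterm ×ˢ Set.univ, hP.prod, fun x w w' hw hw' => ?_⟩
  rw [hW.homRel_prod_eq_snd hw, hW.homRel_prod_eq_snd hw']

/-- If some plan solves a planning problem `(W, Vgoal)` with `W` in
state-determined presentation, then some homomorphic solution solves it. -/
theorem plan_exists_implies_homomorphic_plan_exists
    {U Y : Type} [Nonempty U] [Nonempty Y]
    (W : PGraph U Y) (Vgoal : Set W.V) (hW : W.StateDetermined)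
    (hsol : ∃ (P : PGraph U Y) (Pterm : Set P.V), PGraph.Solves P Pterm W Vgoal) :
    ∃ (Q : PGraph U Y) (Qterm : Set Q.V),
      PGraph.HomomorphicSolution Q Qterm W Vgoal :=
  plan_exists_implies_homomorphic_plan_exists_general W Vgoal hW hsol
end

section
/- If (P, P_term) is a solution to the planning problem (G, V_goal) that is not a homomorphic solution, then for every label map h, the plan (h(P), P_term) is not a homomorphic solution to (h(G), V_goal). -/
/-!
Every event has a nonempty image under a label map, so fixing one image per event turns any
transition sequence of `P` (or `G`) into one of `h(P)` (or `h(G)`) through the same vertices.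
Hence the relation `R` of `(P, G)` is contained in that of `(h(P), h(G))`, and if the latter is
a function so is the former.
-/

namespace LabelMap

variable {U Y U' Y' : Type}

theorem event_nonempty (h : LabelMap U Y U' Y') : ∀ e : U ⊕ Y, (h.event e).Nonempty
  | Sum.inl u => (h.actMap_nonempty u).image _
  | Sum.inr y => (h.obsMap_nonempty y).image _

theorem exists_forall_mem_event (h : LabelMap U Y U' Y') :
    ∃ f : U ⊕ Y → U' ⊕ Y', ∀ e, f e ∈ h.event e :=
  ⟨fun e => (h.event_nonempty e).some, fun e => (h.event_nonempty e).some_mem⟩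

end LabelMap

namespace PGraph

variable {U Y U' Y' : Type}

theorem Trans.applyMap {Q : PGraph U Y} (h : LabelMap U Y U' Y') {f : U ⊕ Y → U' ⊕ Y'}
    (hf : ∀ e, f e ∈ h.event e) {a b : Q.V} {s : List (U ⊕ Y)} (hs : Q.Trans a s b) :
    (Q.applyMap h).Trans a (s.map f) b := by
  induction hs with
  | nil v => exact Trans.nil (G := Q.applyMap h) v
  | @cons _ _ _ e _ he _ ih => exact Trans.cons (Set.mem_biUnion he (hf e)) ih

theorem mem_lang_applyMap {Q : PGraph U Y} (h : LabelMap U Y U' Y') {f : U ⊕ Y → U' ⊕ Y'}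
    (hf : ∀ e, f e ∈ h.event e) {s : List (U ⊕ Y)} (hs : s ∈ Q.lang) :
    s.map f ∈ (Q.applyMap h).lang :=
  let ⟨v0, hv0, w, hw⟩ := hs
  ⟨v0, hv0, w, hw.applyMap h hf⟩

theorem HomRel.applyMap {P W : PGraph U Y} (h : LabelMap U Y U' Y') {v : P.V} {w : W.V}
    (hvw : HomRel P W v w) : HomRel (P.applyMap h) (W.applyMap h) v w := by
  obtain ⟨f, hf⟩ := h.exists_forall_mem_event
  obtain ⟨s, ⟨hsP, hsW⟩, ⟨v0, hv0, hv⟩, ⟨w0, hw0, hw⟩⟩ := hvw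
  exact ⟨s.map f, ⟨mem_lang_applyMap h hf hsP, mem_lang_applyMap h hf hsW⟩,
    ⟨v0, hv0, hv.applyMap h hf⟩, ⟨w0, hw0, hw.applyMap h hf⟩⟩

theorem HomomorphicSolution.of_applyMap {P W : PGraph U Y} {Pterm : Set P.V}
    {Vgoal : Set W.V} (h : LabelMap U Y U' Y') (hsol : Solves P Pterm W Vgoal)
    (hhom : HomomorphicSolution (P.applyMap h) Pterm (W.applyMap h) Vgoal) :
    HomomorphicSolution P Pterm W Vgoal :=
  ⟨hsol, fun v w w' hw hw' => hhom.2 v w w' (hw.applyMap h) (hw'.applyMap h)⟩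

end PGraph

theorem label_maps_never_introduce_homomorphism_general
    {U Y U' Y' : Type}
    (P G : PGraph U Y) (Pterm : Set P.V) (Vgoal : Set G.V)
    (hsol : PGraph.Solves P Pterm G Vgoal)
    (hnothom : ¬ PGraph.HomomorphicSolution P Pterm G Vgoal)
    (h : LabelMap U Y U' Y') :
    ¬ PGraph.HomomorphicSolution (PGraph.applyMap h P) Pterm
        (PGraph.applyMap h G) Vgoal :=
  fun hhom => hnothom (hhom.of_applyMap h hsol)

/-- Label maps never introduce homomorphism: if `(P, Pterm)` is a
non-homomorphic solution to `(G, Vgoal)` then no label map `h` makes `(h(P), Pterm)`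
a homomorphic solution to `(h(G), Vgoal)`. -/
theorem label_maps_never_introduce_homomorphism
    {U Y U' Y' : Type} [Nonempty U] [Nonempty Y] [Nonempty U'] [Nonempty Y']
    (P G : PGraph U Y) (Pterm : Set P.V) (Vgoal : Set G.V)
    (hsol : PGraph.Solves P Pterm G Vgoal)
    (hnothom : ¬ PGraph.HomomorphicSolution P Pterm G Vgoal)
    (h : LabelMap U Y U' Y') :
    ¬ PGraph.HomomorphicSolution (PGraph.applyMap h P) Pterm
        (PGraph.applyMap h G) Vgoal :=
  label_maps_never_introduce_homomorphism_general P G Pterm Vgoal hsol hnothom h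
end
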